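/- For every n ≥ 1 the following identities of maps [n+1] → [n] hold (each elementary map taken at the appropriate dimension, with the z-factors acting on [n+1] when composed before a u and on [n] when composed after a u): (a) u_i ∘ z_j^{−1} = z_{j−1}^{−1} ∘ t_0 ∘ u_{i+1} ∘ t_0 for 1 ≤ i < j ≤ n+1; (b) u_j ∘ z_j^{−1} = u_1 for 1 ≤ j ≤ n+1; (c) u_i ∘ z_j^{−1} = z_j^{−1} ∘ t_0 ∘ u_i ∘ t_0 for 1 ≤ j < i ≤ n+1. -/
import Mathlib


/-- The elementary coface `d_i^{(n+1)} : [n] → [n+1]` (monotonic injection omitting `i`):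
`k ↦ k` for `k < i` and `k ↦ k+1` for `k ≥ i`. -/
def dMap (n i : ℕ) : Fin (n + 1) → Fin (n + 2) :=
  fun k => if (k : ℕ) < i then ⟨k, by omega⟩ else ⟨(k : ℕ) + 1, by omega⟩

/-- The elementary quasi-codegeneracy `u_i^{(n)} : [n+1] → [n]`:
`u_i 0 = u_i i = 0`, `u_i k = k` for `1 ≤ k ≤ i-1`, and `u_i k = k-1` for `k > i`. -/
def uMap (n i : ℕ) : Fin (n + 2) → Fin (n + 1) :=
  fun k => if (k : ℕ) = 0 ∨ (k : ℕ) = i then 0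
    else if h : (k : ℕ) < i ∧ (k : ℕ) < n + 1 then ⟨k, h.2⟩
    else ⟨(k : ℕ) - 1, by omega⟩

/-- The adjacent transposition `t_i : [n] → [n]` exchanging `i` and `i+1`. -/
def tMap (n i : ℕ) : Fin (n + 1) → Fin (n + 1) :=
  fun k => if h : (k : ℕ) = i ∧ i + 1 < n + 1 then ⟨i + 1, h.2⟩
    else if h2 : (k : ℕ) = i + 1 then ⟨i, by omega⟩
    else k

/-- The standard cyclic permutation `z_i : [n] → [n]`:
`k ↦ k+1` for `k ≤ i-1`, `i ↦ 0`, and `k ↦ k` for `k > i`. -/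
def zMap (n i : ℕ) : Fin (n + 1) → Fin (n + 1) :=
  fun k => if (k : ℕ) = i then 0
    else if h : (k : ℕ) < i ∧ (k : ℕ) + 1 < n + 1 then ⟨(k : ℕ) + 1, h.2⟩
    else k

/-- Explicit inverse of `zMap n i`. -/
def zInv (n i : ℕ) : Fin (n + 1) → Fin (n + 1) :=
  fun k => if h : (k : ℕ) = 0 ∧ i < n + 1 then ⟨i, h.2⟩
    else if h2 : (k : ℕ) ≤ i then ⟨(k : ℕ) - 1, by omega⟩
    else k

lemma zMap_zInv (n i : ℕ) (hi : i ≤ n) : zMap n i ∘ zInv n i = id := by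
  funext k
  simp only [Function.comp_apply, zMap, zInv, id]
  split_ifs <;> (apply Fin.ext <;> simp_all <;> omega)

lemma uMap_val (n i : ℕ) (k : Fin (n + 2)) :
    (uMap n i k : ℕ) = if (k : ℕ) = 0 ∨ (k : ℕ) = i then 0
      else if (k : ℕ) < i ∧ (k : ℕ) < n + 1 then (k : ℕ) else (k : ℕ) - 1 := by
  simp only [uMap]; split_ifs <;> rfl

lemma tMap_val (n i : ℕ) (k : Fin (n + 1)) :
    (tMap n i k : ℕ) = if (k : ℕ) = i ∧ i + 1 < n + 1 then i + 1
      else if (k : ℕ) = i + 1 then i else (k : ℕ) := by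
  simp only [tMap]; split_ifs <;> rfl

lemma zInv_val (n i : ℕ) (k : Fin (n + 1)) :
    (zInv n i k : ℕ) = if (k : ℕ) = 0 ∧ i < n + 1 then i
      else if (k : ℕ) ≤ i then (k : ℕ) - 1 else (k : ℕ) := by
  simp only [zInv]; split_ifs <;> rfl

lemma uMap_cases (n i : ℕ) (k : Fin (n + 2)) :
    (((k : ℕ) = 0 ∨ (k : ℕ) = i) ∧ (uMap n i k : ℕ) = 0) ∨
    (¬((k : ℕ) = 0 ∨ (k : ℕ) = i) ∧ ((k : ℕ) < i ∧ (k : ℕ) < n + 1) ∧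
      (uMap n i k : ℕ) = k) ∨
    (¬((k : ℕ) = 0 ∨ (k : ℕ) = i) ∧ ¬((k : ℕ) < i ∧ (k : ℕ) < n + 1) ∧
      (uMap n i k : ℕ) = (k : ℕ) - 1) := by
  simp only [uMap_val]; split_ifs <;> simp_all

lemma tMap_cases (n i : ℕ) (k : Fin (n + 1)) :
    ((k : ℕ) = i ∧ i + 1 < n + 1 ∧ (tMap n i k : ℕ) = i + 1) ∨
    (¬((k : ℕ) = i ∧ i + 1 < n + 1) ∧ (k : ℕ) = i + 1 ∧ (tMap n i k : ℕ) = i) ∨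
    (¬((k : ℕ) = i ∧ i + 1 < n + 1) ∧ ¬(k : ℕ) = i + 1 ∧ (tMap n i k : ℕ) = k) := by
  simp only [tMap_val]; split_ifs <;> simp_all

lemma zInv_cases (n i : ℕ) (k : Fin (n + 1)) :
    ((k : ℕ) = 0 ∧ i < n + 1 ∧ (zInv n i k : ℕ) = i) ∨
    (¬((k : ℕ) = 0 ∧ i < n + 1) ∧ (k : ℕ) ≤ i ∧ (zInv n i k : ℕ) = (k : ℕ) - 1) ∨
    (¬((k : ℕ) = 0 ∧ i < n + 1) ∧ ¬(k : ℕ) ≤ i ∧ (zInv n i k : ℕ) = k) := by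
  simp only [zInv_val]; split_ifs <;> simp_all

lemma zinv_unique (n i : ℕ) (hi : i ≤ n) (f : Fin (n + 1) → Fin (n + 1))
    (hf : f ∘ zMap n i = id) : f = zInv n i := by
  calc f = f ∘ (zMap n i ∘ zInv n i) := by rw [zMap_zInv n i hi]; rfl
    _ = (f ∘ zMap n i) ∘ zInv n i := rfl
    _ = zInv n i := by rw [hf]; rfl

/-- identities for composing a quasi-codegeneracy with the inverse of a
cyclic permutation, as maps `[n+1] → [n]` (for `n ≥ 1`).  Here `zjinv` denotes a
two-sided inverse of the cyclic permutation `z_j` of `[n+1]`, `zj1inv` a two-sided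
inverse of `z_{j-1}` of `[n]`, and `zjinv'` a two-sided inverse of `z_j` of `[n]`. -/
theorem u_comp_zinv (n : ℕ) (hn : 1 ≤ n) :
    -- (a) `u_i ∘ z_j⁻¹ = z_{j-1}⁻¹ ∘ t_0 ∘ u_{i+1} ∘ t_0` for `1 ≤ i < j ≤ n+1`
    (∀ i j : ℕ, 1 ≤ i → i < j → j ≤ n + 1 →
      ∀ zjinv : Fin (n + 2) → Fin (n + 2), ∀ zj1inv : Fin (n + 1) → Fin (n + 1),
        zMap (n + 1) j ∘ zjinv = id → zjinv ∘ zMap (n + 1) j = id →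
        zMap n (j - 1) ∘ zj1inv = id → zj1inv ∘ zMap n (j - 1) = id →
        uMap n i ∘ zjinv = zj1inv ∘ tMap n 0 ∘ uMap n (i + 1) ∘ tMap (n + 1) 0) ∧
    -- (b) `u_j ∘ z_j⁻¹ = u_1` for `1 ≤ j ≤ n+1`
    (∀ j : ℕ, 1 ≤ j → j ≤ n + 1 →
      ∀ zjinv : Fin (n + 2) → Fin (n + 2),
        zMap (n + 1) j ∘ zjinv = id → zjinv ∘ zMap (n + 1) j = id →
        uMap n j ∘ zjinv = uMap n 1) ∧
    -- (c) `u_i ∘ z_j⁻¹ = z_j⁻¹ ∘ t_0 ∘ u_i ∘ t_0` for `1 ≤ j < i ≤ n+1`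
    (∀ i j : ℕ, 1 ≤ j → j < i → i ≤ n + 1 →
      ∀ zjinv : Fin (n + 2) → Fin (n + 2), ∀ zjinv' : Fin (n + 1) → Fin (n + 1),
        zMap (n + 1) j ∘ zjinv = id → zjinv ∘ zMap (n + 1) j = id →
        zMap n j ∘ zjinv' = id → zjinv' ∘ zMap n j = id →
        uMap n i ∘ zjinv = zjinv' ∘ tMap n 0 ∘ uMap n i ∘ tMap (n + 1) 0) := by
  refine ⟨?_, ?_, ?_⟩
  · intro i j hi hij hj zjinv zj1inv _ h2 _ h4
    rw [zinv_unique (n+1) j (by omega) zjinv h2, zinv_unique n (j-1) (by omega) zj1inv h4]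
    funext k
    apply Fin.ext
    simp only [Function.comp_apply]
    have hA := zInv_cases (n + 1) j k
    have hB := uMap_cases n i (zInv (n + 1) j k)
    have hC := tMap_cases (n + 1) 0 k
    have hD := uMap_cases n (i + 1) (tMap (n + 1) 0 k)
    have hE := tMap_cases n 0 (uMap n (i + 1) (tMap (n + 1) 0 k))
    have hF := zInv_cases n (j - 1) (tMap n 0 (uMap n (i + 1) (tMap (n + 1) 0 k)))
    have := k.isLt
    have := (zInv (n + 1) j k).isLt
    have := (tMap (n + 1) 0 k).isLt
    have := (uMap n (i + 1) (tMap (n + 1) 0 k)).isLt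
    have := (tMap n 0 (uMap n (i + 1) (tMap (n + 1) 0 k))).isLt
    omega
  · intro j hj1 hj zjinv _ h2
    rw [zinv_unique (n+1) j (by omega) zjinv h2]
    funext k
    apply Fin.ext
    simp only [Function.comp_apply]
    have hA := zInv_cases (n + 1) j k
    have hB := uMap_cases n j (zInv (n + 1) j k)
    have hC := uMap_cases n 1 k
    have := k.isLt
    have := (zInv (n + 1) j k).isLt
    omega
  · intro i j hj hij hi zjinv zjinv' _ h2 _ h4
    rw [zinv_unique (n+1) j (by omega) zjinv h2, zinv_unique n j (by omega) zjinv' h4]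
    funext k
    apply Fin.ext
    simp only [Function.comp_apply]
    have hA := zInv_cases (n + 1) j k
    have hB := uMap_cases n i (zInv (n + 1) j k)
    have hC := tMap_cases (n + 1) 0 k
    have hD := uMap_cases n i (tMap (n + 1) 0 k)
    have hE := tMap_cases n 0 (uMap n i (tMap (n + 1) 0 k))
    have hF := zInv_cases n j (tMap n 0 (uMap n i (tMap (n + 1) 0 k)))
    have := k.isLt
    have := (zInv (n + 1) j k).isLt
    have := (tMap (n + 1) 0 k).isLt
    have := (uMap n i (tMap (n + 1) 0 k)).isLt
    have := (tMap n 0 (uMap n i (tMap (n + 1) 0 k))).isLt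
    omega
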